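/- Let ℋ = ℋ₁ ⊗ ℋ₂ be a finite-dimensional bipartite complex Hilbert space and, for an operator Q on ℋ, let ‖Q‖_* := inf{‖Q − P ⊗ 1₂‖ : P an operator on ℋ₁}. If Q is positive definite (hence invertible), then ‖Q⁻¹‖_* ≤ 2 ‖Q⁻¹‖² ‖Q‖_*. -/

import Mathlib

open scoped Kronecker ComplexOrder

namespace QIT

/-- Operator norm of a matrix, i.e. the norm of the induced operator on Euclidean space. -/
noncomputable def opNorm {n : Type*} [Fintype n] [DecidableEq n] (M : Matrix n n ℂ) : ℝ :=
  ‖Matrix.toEuclideanCLM (𝕜 := ℂ) M‖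

/-- Partial trace over the second tensor factor. -/
noncomputable def ptraceRight {a c : Type*} [Fintype a] [Fintype c]
    (M : Matrix (a × c) (a × c) ℂ) : Matrix a a ℂ :=
  fun i j => ∑ k, M (i, k) (j, k)

/-- The operator-norm distance `‖Q‖_*` from `Q` to the subalgebra `B(ℋ₁) ⊗ 1₂`. -/
noncomputable def distFactor {n₁ n₂ : Type*} [Fintype n₁] [DecidableEq n₁]
    [Fintype n₂] [DecidableEq n₂] (Q : Matrix (n₁ × n₂) (n₁ × n₂) ℂ) : ℝ :=
  sInf {x : ℝ | ∃ P : Matrix n₁ n₁ ℂ, x = opNorm (Q - P ⊗ₖ (1 : Matrix n₂ n₂ ℂ))}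

/-- Conditional expectation onto `B(ℋ₁) ⊗ 1₂`: `E(Q) = ((tr₂ Q)/dim ℋ₂) ⊗ 1₂`. -/
noncomputable def condExpFactor {n₁ n₂ : Type*} [Fintype n₁] [DecidableEq n₁]
    [Fintype n₂] [DecidableEq n₂] (Q : Matrix (n₁ × n₂) (n₁ × n₂) ℂ) :
    Matrix (n₁ × n₂) (n₁ × n₂) ℂ :=
  ((Fintype.card n₂ : ℂ)⁻¹ • ptraceRight Q) ⊗ₖ (1 : Matrix n₂ n₂ ℂ)

/-!
Fix `P`, and let `ε = ‖Q - P ⊗ 1‖` and `c = ‖Q⁻¹‖`. If `2cε ≤ 1`, a Neumann series shows that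
`P ⊗ 1` is invertible, and the resolvent identity `Q⁻¹ - (P ⊗ 1)⁻¹ = Q⁻¹ (P ⊗ 1 - Q) (P ⊗ 1)⁻¹`
gives first `‖(P ⊗ 1)⁻¹‖ ≤ 2c` and then `‖Q⁻¹ - P⁻¹ ⊗ 1‖ ≤ 2c²ε`. If `2cε > 1`, already
`‖Q⁻¹‖_* ≤ ‖Q⁻¹‖ = c < 2c²ε`.
-/

section NormedRing

open scoped Ring

variable {R : Type*} [NormedRing R]

theorem isUnit_of_norm_inverse_mul_norm_sub_lt_one [HasSummableGeomSeries R] {a b : R}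
    (ha : IsUnit a) (h : ‖a⁻¹ʳ‖ * ‖b - a‖ < 1) : IsUnit b := by
  have hb : b = a * (1 - a⁻¹ʳ * (a - b)) := by
    rw [mul_sub, mul_one, ← mul_assoc, Ring.mul_inverse_cancel a ha, one_mul, sub_sub_cancel]
  have ht : ‖a⁻¹ʳ * (a - b)‖ < 1 :=
    (norm_mul_le _ _).trans_lt (by rwa [norm_sub_rev])
  rw [hb]
  exact ha.mul (Units.oneSub _ ht).isUnit

theorem norm_inverse_le_two_mul {a b : R} (hab : IsUnit a ↔ IsUnit b)
    (h : 2 * ‖a⁻¹ʳ‖ * ‖b - a‖ ≤ 1) : ‖b⁻¹ʳ‖ ≤ 2 * ‖a⁻¹ʳ‖ := by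
  have hb : b⁻¹ʳ = a⁻¹ʳ - a⁻¹ʳ * (b - a) * b⁻¹ʳ := by
    rw [← Ring.inverse_sub_inverse hab, sub_sub_cancel]
  have : ‖b⁻¹ʳ‖ ≤ ‖a⁻¹ʳ‖ + ‖a⁻¹ʳ‖ * ‖b - a‖ * ‖b⁻¹ʳ‖ := calc
    ‖b⁻¹ʳ‖ = ‖a⁻¹ʳ - a⁻¹ʳ * (b - a) * b⁻¹ʳ‖ := congrArg norm hb
    _ ≤ ‖a⁻¹ʳ‖ + ‖a⁻¹ʳ * (b - a) * b⁻¹ʳ‖ := norm_sub_le _ _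
    _ ≤ ‖a⁻¹ʳ‖ + ‖a⁻¹ʳ‖ * ‖b - a‖ * ‖b⁻¹ʳ‖ := by gcongr; exact norm_mul₃_le
  nlinarith [norm_nonneg b⁻¹ʳ]

theorem norm_inverse_sub_inverse_le {a b : R} (hab : IsUnit a ↔ IsUnit b)
    (h : 2 * ‖a⁻¹ʳ‖ * ‖b - a‖ ≤ 1) : ‖a⁻¹ʳ - b⁻¹ʳ‖ ≤ 2 * ‖a⁻¹ʳ‖ ^ 2 * ‖b - a‖ := calc
  ‖a⁻¹ʳ - b⁻¹ʳ‖ ≤ ‖a⁻¹ʳ‖ * ‖b - a‖ * ‖b⁻¹ʳ‖ := Ring.inverse_sub_inverse hab ▸ norm_mul₃_le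
  _ ≤ ‖a⁻¹ʳ‖ * ‖b - a‖ * (2 * ‖a⁻¹ʳ‖) := by gcongr; exact norm_inverse_le_two_mul hab h
  _ = 2 * ‖a⁻¹ʳ‖ ^ 2 * ‖b - a‖ := by ring

end NormedRing

section DistFactor

open scoped Matrix.Norms.L2Operator Ring

variable {n₁ n₂ : Type*} [Fintype n₁] [DecidableEq n₁] [Fintype n₂] [DecidableEq n₂]

theorem opNorm_eq_norm {n : Type*} [Fintype n] [DecidableEq n] (M : Matrix n n ℂ) :
    opNorm M = ‖M‖ := rfl

theorem distFactor_eq_iInf (Q : Matrix (n₁ × n₂) (n₁ × n₂) ℂ) :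
    distFactor Q = ⨅ P : Matrix n₁ n₁ ℂ, opNorm (Q - P ⊗ₖ (1 : Matrix n₂ n₂ ℂ)) := by
  simp only [distFactor, iInf, Set.range, eq_comm]

theorem distFactor_le_opNorm_sub (Q : Matrix (n₁ × n₂) (n₁ × n₂) ℂ) (P : Matrix n₁ n₁ ℂ) :
    distFactor Q ≤ opNorm (Q - P ⊗ₖ (1 : Matrix n₂ n₂ ℂ)) := by
  rw [distFactor_eq_iInf]
  exact ciInf_le ⟨0, by rintro _ ⟨P', rfl⟩; exact norm_nonneg _⟩ P

theorem distFactor_le_opNorm (Q : Matrix (n₁ × n₂) (n₁ × n₂) ℂ) : distFactor Q ≤ opNorm Q := by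
  simpa using distFactor_le_opNorm_sub Q 0

theorem distFactor_inv_le_of_isUnit (Q : Matrix (n₁ × n₂) (n₁ × n₂) ℂ) (hQ : IsUnit Q)
    (P : Matrix n₁ n₁ ℂ) :
    distFactor Q⁻¹ ≤ 2 * opNorm Q⁻¹ ^ 2 * opNorm (Q - P ⊗ₖ (1 : Matrix n₂ n₂ ℂ)) := by
  set A := P ⊗ₖ (1 : Matrix n₂ n₂ ℂ)
  rw [opNorm_eq_norm, opNorm_eq_norm, norm_sub_rev]
  by_cases h : 2 * ‖Q⁻¹‖ * ‖A - Q‖ ≤ 1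
  · rw [Matrix.nonsing_inv_eq_ringInverse] at h
    have hA : IsUnit A := isUnit_of_norm_inverse_mul_norm_sub_lt_one hQ (by
      nlinarith [mul_nonneg (norm_nonneg Q⁻¹ʳ) (norm_nonneg (A - Q))])
    calc distFactor Q⁻¹ ≤ opNorm (Q⁻¹ - P⁻¹ ⊗ₖ (1 : Matrix n₂ n₂ ℂ)) :=
          distFactor_le_opNorm_sub _ _
      _ = ‖Q⁻¹ - A⁻¹‖ := by rw [Matrix.inv_kronecker, inv_one]; rfl
      _ ≤ 2 * ‖Q⁻¹‖ ^ 2 * ‖A - Q‖ := by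
        simpa only [Matrix.nonsing_inv_eq_ringInverse] using
          norm_inverse_sub_inverse_le (iff_of_true hQ hA) h
  · calc distFactor Q⁻¹ ≤ ‖Q⁻¹‖ := distFactor_le_opNorm _
      _ ≤ 2 * ‖Q⁻¹‖ ^ 2 * ‖A - Q‖ := by nlinarith [norm_nonneg Q⁻¹]

end DistFactor

/-- If `Q` is positive definite then `‖Q⁻¹‖_* ≤ 2 ‖Q⁻¹‖² ‖Q‖_*`. -/
theorem distFactor_inv_le {n₁ n₂ : Type*} [Fintype n₁] [DecidableEq n₁]
    [Fintype n₂] [DecidableEq n₂] (Q : Matrix (n₁ × n₂) (n₁ × n₂) ℂ) (hQ : Q.PosDef) :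
    distFactor Q⁻¹ ≤ 2 * opNorm Q⁻¹ ^ 2 * distFactor Q := by
  rw [distFactor_eq_iInf Q, Real.mul_iInf_of_nonneg (by positivity)]
  exact le_ciInf (distFactor_inv_le_of_isUnit Q hQ.isUnit)

end QIT
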